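/- There exists δ > 0 such that for every initial value x₀ with 0 < |x₀ - π| ≤ δ, the sequence defined by x_{n+1} = S(x_n) satisfies x_n ≠ π for all n, converges to π, and the limit lim_{n→∞} (x_{n+1} - π)/(x_n - π)^{2P+1} exists and equals (1/(2P+1)!) · (∏_{ℓ=1}^{P} (2ℓ-1))²; in particular the iteration converges with order of convergence exactly 2P+1. -/

import Mathlib

open Real Finset

/-- The fixed-point function `S` of the paper:
`S(x) = x + ∑_{k=1}^{P} (∏_{ℓ=1}^{k-1} (2ℓ-1)/(2ℓ)) · sin(x)^{2k-1}/(2k-1)`. -/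
noncomputable def S (P : ℕ) (x : ℝ) : ℝ :=
  x + ∑ k ∈ Finset.Icc 1 P,
    (∏ l ∈ Finset.Icc 1 (k - 1), ((2 * (l : ℝ) - 1) / (2 * l))) *
      (Real.sin x) ^ (2 * k - 1) / (2 * (k : ℝ) - 1)

open Filter



noncomputable def cc (i : ℕ) : ℝ := ∏ l ∈ Finset.Icc 1 i, ((2 * (l : ℝ) - 1) / (2 * l))

lemma cc_zero : cc 0 = 1 := by simp [cc]

lemma cc_succ (i : ℕ) : cc (i + 1) = cc i * ((2 * (i : ℝ) + 1) / (2 * (i : ℝ) + 2)) := by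
  rw [cc, cc, Finset.prod_Icc_succ_top (Nat.le_add_left 1 i)]
  push_cast
  have : (2*((i:ℝ)+1)-1)/(2*((i:ℝ)+1)) = (2*(i:ℝ)+1)/(2*(i:ℝ)+2) := by congr 1 <;> ring
  rw [this]

lemma cc_pos (i : ℕ) : 0 < cc i := by
  apply Finset.prod_pos
  intro l hl
  have h1 : 1 ≤ l := (Finset.mem_Icc.mp hl).1
  have h2 : (1 : ℝ) ≤ (l : ℝ) := by exact_mod_cast h1
  have h3 : (0 : ℝ) < 2 * (l : ℝ) := by linarith
  apply div_pos (by linarith) h3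

lemma cc_rec (i : ℕ) : ((i : ℝ) + 1) * cc (i + 1) = (2 * (i : ℝ) + 1) / 2 * cc i := by
  rw [cc_succ]
  have : (2 * (i : ℝ) + 2) ≠ 0 := by positivity
  field_simp

/-- weighted symmetry: ∑ (2i+1) cc i cc (n-i) = (n+1) ∑ cc i cc (n-i) -/
lemma sum_weighted (n : ℕ) :
    ∑ i ∈ range (n + 1), (2 * (i : ℝ) + 1) * (cc i * cc (n - i)) =
      ((n : ℝ) + 1) * ∑ i ∈ range (n + 1), cc i * cc (n - i) := by
  have h := Finset.sum_range_reflect (fun i => (2 * (i : ℝ) + 1) * (cc i * cc (n - i))) (n + 1)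
  have h2 : ∀ i ∈ range (n + 1),
      (2 * ((n + 1 - 1 - i : ℕ) : ℝ) + 1) * (cc (n + 1 - 1 - i) * cc (n - (n + 1 - 1 - i)))
        = (2 * ((n : ℝ) - i) + 1) * (cc (n - i) * cc i) := by
    intro i hi
    have hi' : i ≤ n := by simpa [Nat.lt_succ_iff] using hi
    have e1 : n + 1 - 1 - i = n - i := by omega
    have e2 : n - (n - i) = i := by omega
    have e3 : ((n - i : ℕ) : ℝ) = (n : ℝ) - i := by
      push_cast [Nat.cast_sub hi']; ring
    rw [e1, e2, e3]
  rw [Finset.sum_congr rfl h2] at h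
  -- h : ∑ i, (2(n-i)+1) (cc(n-i) cc i) = ∑ i, (2i+1)(cc i cc (n-i))
  have key : ∑ i ∈ range (n + 1), ((2 * (i : ℝ) + 1) * (cc i * cc (n - i))
      + (2 * ((n : ℝ) - i) + 1) * (cc (n - i) * cc i))
      = ∑ i ∈ range (n + 1), (2 * (n : ℝ) + 2) * (cc i * cc (n - i)) := by
    apply Finset.sum_congr rfl
    intro i hi; ring
  rw [Finset.sum_add_distrib, h] at key
  rw [← Finset.mul_sum] at key
  linear_combination key / 2

lemma rr (m : ℕ) : ∑ i ∈ range (m + 1), cc i * cc (m - i) = 1 := by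
  induction m with
  | zero => simp [cc_zero]
  | succ m ih =>
    -- ∑_{i<m+2} i * F i  =  ∑_{i<m+1} (i+1) cc(i+1) cc(m-i)
    have shift : ∑ i ∈ range (m + 2), (i : ℝ) * (cc i * cc (m + 1 - i))
        = ∑ i ∈ range (m + 1), ((i : ℝ) + 1) * (cc (i+1) * cc (m - i)) := by
      rw [Finset.sum_range_succ' (fun i => (i : ℝ) * (cc i * cc (m + 1 - i))) (m+1)]
      simp only [Nat.cast_zero, zero_mul, add_zero]
      apply Finset.sum_congr rfl
      intro i hi
      have : m + 1 - (i + 1) = m - i := by omega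
      rw [this]; push_cast; ring
    have step2 : ∑ i ∈ range (m + 1), ((i : ℝ) + 1) * (cc (i+1) * cc (m - i))
        = ∑ i ∈ range (m + 1), ((2 * (i : ℝ) + 1)/2) * (cc i * cc (m - i)) := by
      apply Finset.sum_congr rfl
      intro i _
      have := cc_rec i
      calc ((i : ℝ) + 1) * (cc (i+1) * cc (m - i)) = (((i:ℝ)+1) * cc (i+1)) * cc (m-i) := by ring
        _ = ((2 * (i : ℝ) + 1) / 2 * cc i) * cc (m - i) := by rw [this]
        _ = ((2 * (i : ℝ) + 1)/2) * (cc i * cc (m - i)) := by ring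
    have w_m : ∑ i ∈ range (m + 1), (2 * (i : ℝ) + 1) * (cc i * cc (m - i)) = ((m:ℝ)+1) := by
      rw [sum_weighted m, ih, mul_one]
    have sum_i : ∑ i ∈ range (m + 2), (i : ℝ) * (cc i * cc (m + 1 - i)) = ((m:ℝ)+1)/2 := by
      rw [shift, step2]
      have : ∑ i ∈ range (m + 1), ((2 * (i : ℝ) + 1)/2) * (cc i * cc (m - i))
          = (∑ i ∈ range (m + 1), (2 * (i : ℝ) + 1) * (cc i * cc (m - i))) / 2 := by
        rw [Finset.sum_div]
        apply Finset.sum_congr rfl; intro i _; ring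
      rw [this, w_m]
    have w_m1 := sum_weighted (m + 1)
    -- ∑ (2i+1) F = 2 ∑ i F + ∑ F
    have expand : ∑ i ∈ range (m + 2), (2 * (i : ℝ) + 1) * (cc i * cc (m + 1 - i))
        = 2 * (∑ i ∈ range (m + 2), (i : ℝ) * (cc i * cc (m + 1 - i)))
          + ∑ i ∈ range (m + 2), cc i * cc (m + 1 - i) := by
      rw [Finset.mul_sum, ← Finset.sum_add_distrib]
      apply Finset.sum_congr rfl; intro i _; push_cast; ring
    rw [expand, sum_i] at w_m1
    push_cast at w_m1
    rw [show m+1+1 = m+2 from rfl] at w_m1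
    have hm : (m : ℝ) + 1 ≠ 0 := by positivity
    have : ((m:ℝ)+1) * (∑ i ∈ range (m + 2), cc i * cc (m + 1 - i)) = ((m:ℝ)+1) * 1 := by
      linear_combination -w_m1
    exact mul_left_cancel₀ hm this


noncomputable def qq (P : ℕ) : Polynomial ℝ := ∑ j ∈ range P, Polynomial.C (cc j) * Polynomial.X ^ j

lemma qq_coeff (P n : ℕ) : (qq P).coeff n = if n < P then cc n else 0 := by
  rw [qq, Polynomial.finset_sum_coeff]
  simp only [Polynomial.coeff_C_mul, Polynomial.coeff_X_pow, mul_ite, mul_one, mul_zero]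
  rw [Finset.sum_ite_eq (range P) n (fun j => cc j)]
  simp [Finset.mem_range]

lemma qq_eval (P : ℕ) (u : ℝ) : (qq P).eval u = ∑ j ∈ range P, cc j * u ^ j := by
  rw [qq, Polynomial.eval_finset_sum]; simp

lemma qq_eval_zero (P : ℕ) (hP : 0 < P) : (qq P).eval 0 = 1 := by
  rw [qq_eval]
  rw [Finset.sum_eq_single 0]
  · simp [cc_zero]
  · intro j _ hj; simp [zero_pow hj]
  · intro h; simp [Finset.mem_range] at h; omega

lemma qqsq_coeff (P n : ℕ) (hn : n < P) : ((qq P) ^ 2).coeff n = 1 := by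
  rw [sq, Polynomial.coeff_mul, Finset.Nat.sum_antidiagonal_eq_sum_range_succ_mk]
  rw [← rr n]
  apply Finset.sum_congr rfl
  intro i hi
  have hi' : i ≤ n := by simpa [Nat.lt_succ_iff] using hi
  rw [qq_coeff, qq_coeff, if_pos (by omega), if_pos (by omega)]

lemma qqsq_coeff_top (P : ℕ) (hP : 0 < P) : ((qq P) ^ 2).coeff P = 1 - 2 * cc P := by
  rw [sq, Polynomial.coeff_mul, Finset.Nat.sum_antidiagonal_eq_sum_range_succ_mk]
  have h1 : ∑ i ∈ range (P + 1), (qq P).coeff i * (qq P).coeff (P - i)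
      = ∑ i ∈ range (P + 1), (cc i * cc (P - i)
          - (if i = 0 then cc 0 * cc P else 0) - (if i = P then cc P * cc 0 else 0)) := by
    apply Finset.sum_congr rfl
    intro i hi
    have hi' : i ≤ P := by simpa [Nat.lt_succ_iff] using hi
    rw [qq_coeff, qq_coeff]
    rcases Nat.eq_zero_or_pos i with rfl | h0
    · rw [Nat.sub_zero, if_pos hP, if_neg (lt_irrefl P), if_pos rfl,
        if_neg (by omega : ¬ (0:ℕ) = P)]
      ring
    · rcases eq_or_lt_of_le hi' with rfl | hlt
      · rw [if_neg (lt_irrefl i), Nat.sub_self, if_pos h0, if_neg (by omega : ¬ i = 0),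
          if_pos rfl]
        ring
      · rw [if_pos hlt, if_pos (by omega : P - i < P), if_neg (by omega : ¬ i = 0),
          if_neg (by omega : ¬ i = P)]
        ring
  rw [h1, Finset.sum_sub_distrib, Finset.sum_sub_distrib, rr P]
  rw [Finset.sum_ite_eq' (range (P+1)) 0 (fun _ => cc 0 * cc P)]
  rw [Finset.sum_ite_eq' (range (P+1)) P (fun _ => cc P * cc 0)]
  simp [cc_zero, Finset.mem_range]
  ring

lemma pol_coeff_low (P m : ℕ) (hm : m < P) :
    ((1 : Polynomial ℝ) - (1 - Polynomial.X) * (qq P) ^ 2).coeff m = 0 := by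
  have hexp : ((1 : Polynomial ℝ) - (1 - Polynomial.X) * (qq P) ^ 2)
      = 1 - (qq P)^2 + Polynomial.X * (qq P)^2 := by ring
  rw [hexp]
  rcases Nat.eq_zero_or_pos m with h0 | h0
  · subst h0
    simp [Polynomial.coeff_add, Polynomial.coeff_sub, Polynomial.mul_coeff_zero,
      qqsq_coeff P 0 hm]
  · obtain ⟨m', rfl⟩ := Nat.exists_eq_succ_of_ne_zero (by omega : m ≠ 0)
    rw [Polynomial.coeff_add, Polynomial.coeff_sub, Polynomial.coeff_X_mul]
    rw [qqsq_coeff P _ hm, qqsq_coeff P _ (by omega)]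
    simp [Polynomial.coeff_one, Nat.succ_ne_zero]

lemma pol_coeff_P (P : ℕ) (hP : 0 < P) :
    ((1 : Polynomial ℝ) - (1 - Polynomial.X) * (qq P) ^ 2).coeff P = 2 * cc P := by
  have hexp : ((1 : Polynomial ℝ) - (1 - Polynomial.X) * (qq P) ^ 2)
      = 1 - (qq P)^2 + Polynomial.X * (qq P)^2 := by ring
  rw [hexp]
  obtain ⟨m', rfl⟩ := Nat.exists_eq_succ_of_ne_zero (by omega : P ≠ 0)
  rw [Polynomial.coeff_add, Polynomial.coeff_sub, Polynomial.coeff_X_mul]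
  rw [qqsq_coeff_top _ hP, qqsq_coeff _ m' (by omega)]
  simp [Polynomial.coeff_one, Nat.succ_ne_zero]

lemma pol_dvd (P : ℕ) :
    (Polynomial.X : Polynomial ℝ) ^ P ∣ (1 - (1 - Polynomial.X) * (qq P) ^ 2) := by
  rw [Polynomial.X_pow_dvd_iff]
  intro d hd
  exact pol_coeff_low P d hd


noncomputable def gg (P : ℕ) (e : ℝ) : ℝ :=
  e - ∑ j ∈ range P, cc j * Real.sin e ^ (2 * j + 1) / (2 * (j : ℝ) + 1)

lemma gg_zero (P : ℕ) : gg P 0 = 0 := by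
  simp [gg]

lemma gg_continuous (P : ℕ) : Continuous (gg P) := by
  unfold gg
  apply Continuous.sub continuous_id
  apply continuous_finset_sum
  intro j _
  exact (continuous_const.mul (Real.continuous_sin.pow _)).div_const _

lemma hasDerivAt_gg (P : ℕ) (e : ℝ) :
    HasDerivAt (gg P) (1 - Real.cos e * (qq P).eval (Real.sin e ^ 2)) e := by
  have h1 : ∀ j : ℕ, HasDerivAt (fun x => cc j * Real.sin x ^ (2 * j + 1) / (2 * (j : ℝ) + 1))
      (cc j * Real.cos e * (Real.sin e ^ 2) ^ j) e := by
    intro j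
    have hs : HasDerivAt (fun x => Real.sin x ^ (2 * j + 1))
        ((2 * j + 1 : ℕ) * Real.sin e ^ (2 * j + 1 - 1) * Real.cos e) e :=
      (Real.hasDerivAt_sin e).pow (2 * j + 1)
    have := (hs.const_mul (cc j)).div_const (2 * (j : ℝ) + 1)
    refine this.congr_deriv ?_
    have h2 : (2 * j + 1 - 1) = 2 * j := by omega
    rw [h2]
    have h3 : (2 * (j : ℝ) + 1) ≠ 0 := by positivity
    field_simp
    rw [← pow_mul]
    push_cast
    ring
  have hsum : HasDerivAt (fun x => ∑ j ∈ range P, cc j * Real.sin x ^ (2 * j + 1) / (2 * (j : ℝ) + 1))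
      (∑ j ∈ range P, cc j * Real.cos e * (Real.sin e ^ 2) ^ j) e :=
    HasDerivAt.fun_sum (fun j _ => h1 j)
  have := (hasDerivAt_id e).sub hsum
  refine HasDerivAt.congr_deriv (f := gg P) this ?_
  rw [qq_eval, Finset.mul_sum]
  congr 1
  apply Finset.sum_congr rfl
  intro j _
  ring

lemma tendsto_sin_div : Tendsto (fun e : ℝ => Real.sin e / e) (nhdsWithin 0 {0}ᶜ) (nhds 1) := by
  have h := (hasDerivAt_iff_tendsto_slope).mp (Real.hasDerivAt_sin 0)
  rw [Real.cos_zero] at h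
  refine h.congr (fun e => ?_)
  rw [slope_def_field]
  simp

lemma key (P : ℕ) (hP : 0 < P) :
    Tendsto (fun e => gg P e / e ^ (2 * P + 1)) (nhdsWithin (0:ℝ) {0}ᶜ)
      (nhds (cc P / (2 * (P : ℝ) + 1))) := by
  obtain ⟨D, hD⟩ := pol_dvd P
  have hDeval0 : D.eval 0 = 2 * cc P := by
    have h1 : ((Polynomial.X : Polynomial ℝ) ^ P * D).coeff (0 + P) = D.coeff 0 :=
      Polynomial.coeff_X_pow_mul D P 0
    rw [← hD, zero_add, pol_coeff_P P hP] at h1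
    rw [← Polynomial.coeff_zero_eq_eval_zero, ← h1]
  set w : ℝ → ℝ := fun e => 1 + Real.cos e * (qq P).eval (Real.sin e ^ 2) with hw
  have hwcont : Continuous w :=
    continuous_const.add (Real.continuous_cos.mul
      ((qq P).continuous.comp (Real.continuous_sin.pow 2)))
  have hw0 : w 0 = 2 := by simp [hw, qq_eval_zero P hP]; norm_num
  have hA : ∀ e : ℝ, (1 - Real.cos e * (qq P).eval (Real.sin e ^ 2)) * w e
      = Real.sin e ^ (2 * P) * D.eval (Real.sin e ^ 2) := by
    intro e
    have hx : Real.cos e ^ 2 = 1 - Real.sin e ^ 2 := Real.cos_sq' e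
    have hev := congrArg (Polynomial.eval (Real.sin e ^ 2)) hD
    simp only [Polynomial.eval_sub, Polynomial.eval_mul, Polynomial.eval_pow,
      Polynomial.eval_one, Polynomial.eval_X] at hev
    simp only [hw]
    linear_combination hev - ((qq P).eval (Real.sin e ^ 2))^2 * hx
  have hwne : ∀ᶠ e in nhds (0:ℝ), w e ≠ 0 :=
    hwcont.continuousAt.eventually_ne (by rw [hw0]; norm_num)
  have hlim2 : Tendsto (fun e : ℝ => D.eval (Real.sin e ^ 2) / ((2 * (P:ℝ) + 1) * w e))
      (nhds 0) (nhds (cc P / (2 * (P:ℝ) + 1))) := by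
    have hcont : ContinuousAt (fun e : ℝ => D.eval (Real.sin e ^ 2) / ((2 * (P:ℝ) + 1) * w e)) 0 := by
      apply ContinuousAt.div
      · exact (D.continuous.comp (Real.continuous_sin.pow 2)).continuousAt
      · exact (continuous_const.mul hwcont).continuousAt
      · rw [hw0]; positivity
    have hval : D.eval (Real.sin (0:ℝ) ^ 2) / ((2 * (P:ℝ) + 1) * w 0) = cc P / (2 * (P:ℝ) + 1) := by
      rw [hw0]
      simp only [Real.sin_zero]
      norm_num
      rw [hDeval0]
      have h2 : (2 * (P:ℝ) + 1) ≠ 0 := by positivity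
      field_simp
    have := hcont.tendsto
    rw [hval] at this
    exact this
  have hAlim : Tendsto (fun e => (1 - Real.cos e * (qq P).eval (Real.sin e ^ 2))
      / ((2 * (P:ℝ) + 1) * e ^ (2 * P))) (nhdsWithin (0:ℝ) {0}ᶜ)
      (nhds (cc P / (2 * (P:ℝ) + 1))) := by
    have hmain : Tendsto (fun e : ℝ => (Real.sin e / e) ^ (2 * P)
        * (D.eval (Real.sin e ^ 2) / ((2 * (P:ℝ) + 1) * w e)))
        (nhdsWithin (0:ℝ) {0}ᶜ) (nhds (1 ^ (2*P) * (cc P / (2 * (P:ℝ) + 1)))) :=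
      (tendsto_sin_div.pow _).mul (hlim2.mono_left nhdsWithin_le_nhds)
    rw [one_pow, one_mul] at hmain
    apply hmain.congr'
    filter_upwards [hwne.filter_mono nhdsWithin_le_nhds, self_mem_nhdsWithin] with e hwe he0
    have he : e ≠ 0 := he0
    have hAe : (1 - Real.cos e * (qq P).eval (Real.sin e ^ 2))
        = Real.sin e ^ (2*P) * D.eval (Real.sin e ^ 2) / w e := by
      rw [eq_div_iff hwe]; exact hA e
    rw [div_pow, hAe]
    have h2 : (2 * (P:ℝ) + 1) ≠ 0 := by positivity
    field_simp
    try ring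
    try exact Or.inl trivial
  -- L'Hôpital
  have h2P1 : ((2*P+1 : ℕ) : ℝ) = 2 * (P:ℝ) + 1 := by push_cast; ring
  apply HasDerivAt.lhopital_zero_nhdsNE
      (f' := fun e => 1 - Real.cos e * (qq P).eval (Real.sin e ^ 2))
      (g' := fun e : ℝ => (2 * (P:ℝ) + 1) * e ^ (2 * P))
  · exact Eventually.of_forall (fun e => hasDerivAt_gg P e)
  · apply Eventually.of_forall
    intro e
    have := hasDerivAt_pow (2*P+1) e
    rw [show 2*P+1-1 = 2*P from by omega, h2P1] at this
    exact this
  · filter_upwards [self_mem_nhdsWithin] with e he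
    have he' : e ≠ 0 := he
    have h2 : (2 * (P:ℝ) + 1) ≠ 0 := by positivity
    exact mul_ne_zero h2 (pow_ne_zero _ he')
  · exact ((gg_continuous P).tendsto' 0 0 (gg_zero P)).mono_left nhdsWithin_le_nhds
  · exact (((continuous_pow (2*P+1)).tendsto' (0:ℝ) 0 (by simp)).mono_left nhdsWithin_le_nhds)
  · exact hAlim




lemma S_pi_add (P : ℕ) (e : ℝ) : S P (Real.pi + e) = Real.pi + gg P e := by
  rw [S, gg]
  have hs : Real.sin (Real.pi + e) = - Real.sin e := by
    rw [Real.sin_add]; simp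
  rw [hs]
  have hIcc : Finset.Icc 1 P = Finset.Ico 1 (P + 1) := by
    rw [Finset.Ico_add_one_right_eq_Icc]
  rw [hIcc, Finset.sum_Ico_eq_sum_range]
  simp only [Nat.add_sub_cancel]
  have hterm : ∀ j ∈ range P,
      (∏ l ∈ Finset.Icc 1 (1 + j - 1), ((2 * (l : ℝ) - 1) / (2 * l))) *
        (- Real.sin e) ^ (2 * (1 + j) - 1) / (2 * ((1 + j : ℕ) : ℝ) - 1)
      = - (cc j * Real.sin e ^ (2 * j + 1) / (2 * (j : ℝ) + 1)) := by
    intro j _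
    have h1 : 1 + j - 1 = j := by omega
    have h2 : 2 * (1 + j) - 1 = 2 * j + 1 := by omega
    have h3 : ((1 + j : ℕ) : ℝ) = 1 + (j : ℝ) := by push_cast; ring
    rw [h1, h2, h3]
    have h4 : (- Real.sin e) ^ (2 * j + 1) = - (Real.sin e ^ (2 * j + 1)) :=
      Odd.neg_pow ⟨j, by ring⟩ _
    rw [h4, cc]
    have h5 : 2 * (1 + (j:ℝ)) - 1 = 2 * (j:ℝ) + 1 := by ring
    rw [h5]
    ring
  rw [Finset.sum_congr rfl hterm, Finset.sum_neg_distrib]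
  ring

lemma prod_odd_mul_prod_even (P : ℕ) :
    (∏ l ∈ Finset.Icc 1 P, (2 * (l : ℝ) - 1)) * (∏ l ∈ Finset.Icc 1 P, (2 * (l : ℝ)))
      = (Nat.factorial (2 * P) : ℝ) := by
  induction P with
  | zero => simp
  | succ P ih =>
    rw [Finset.prod_Icc_succ_top (Nat.le_add_left 1 P), Finset.prod_Icc_succ_top (Nat.le_add_left 1 P)]
    have h1 : 2 * (P + 1) = (2 * P + 1) + 1 := by ring
    rw [h1, Nat.factorial_succ, Nat.factorial_succ]
    push_cast
    linear_combination (2 * (P:ℝ) + 2) * (2 * (P:ℝ) + 1) * ih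

lemma prod_even_pos (P : ℕ) : 0 < ∏ l ∈ Finset.Icc 1 P, (2 * (l : ℝ)) := by
  apply Finset.prod_pos
  intro l hl
  have h1 : 1 ≤ l := (Finset.mem_Icc.mp hl).1
  have : (1:ℝ) ≤ l := by exact_mod_cast h1
  linarith

lemma prod_odd_pos (P : ℕ) : 0 < ∏ l ∈ Finset.Icc 1 P, (2 * (l : ℝ) - 1) := by
  apply Finset.prod_pos
  intro l hl
  have h1 : 1 ≤ l := (Finset.mem_Icc.mp hl).1
  have : (1:ℝ) ≤ l := by exact_mod_cast h1
  linarith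

lemma const_eq (P : ℕ) :
    cc P / (2 * (P:ℝ) + 1)
      = (1 / (Nat.factorial (2 * P + 1) : ℝ)) * (∏ l ∈ Finset.Icc 1 P, (2 * (l : ℝ) - 1)) ^ 2 := by
  have hcc : cc P = (∏ l ∈ Finset.Icc 1 P, (2 * (l : ℝ) - 1))
      / (∏ l ∈ Finset.Icc 1 P, (2 * (l : ℝ))) := by
    rw [cc, Finset.prod_div_distrib]
  have hfac : (Nat.factorial (2 * P + 1) : ℝ) = (2 * (P:ℝ) + 1) * (Nat.factorial (2 * P) : ℝ) := by
    rw [Nat.factorial_succ]; push_cast; ring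
  have he := prod_even_pos P
  have ho := prod_odd_pos P
  have hm := prod_odd_mul_prod_even P
  have h2P : (0:ℝ) < 2 * (P:ℝ) + 1 := by positivity
  rw [hcc, hfac, ← hm]
  field_simp

theorem stmt_12 (P : ℕ) (hP : 0 < P) :
    ∃ δ > (0 : ℝ), ∀ x₀ : ℝ, 0 < |x₀ - Real.pi| → |x₀ - Real.pi| ≤ δ →
      (∀ n : ℕ, (S P)^[n] x₀ ≠ Real.pi) ∧
      Filter.Tendsto (fun n => (S P)^[n] x₀) Filter.atTop (nhds Real.pi) ∧
      Filter.Tendsto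
        (fun n => ((S P)^[n + 1] x₀ - Real.pi) / ((S P)^[n] x₀ - Real.pi) ^ (2 * P + 1))
        Filter.atTop
        (nhds ((1 / (Nat.factorial (2 * P + 1) : ℝ)) * (∏ l ∈ Finset.Icc 1 P, (2 * (l : ℝ) - 1)) ^ 2)) := by
  set C : ℝ := cc P / (2 * (P : ℝ) + 1) with hC
  have hCpos : 0 < C := div_pos (cc_pos P) (by positivity)
  -- extract ε from the key limit
  have hev : ∀ᶠ e in nhdsWithin (0:ℝ) {0}ᶜ, |gg P e / e ^ (2 * P + 1) - C| < C := by
    have := (key P hP).eventually (Metric.ball_mem_nhds C hCpos)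
    filter_upwards [this] with e he
    simpa [Real.dist_eq] using he
  rw [eventually_nhdsWithin_iff] at hev
  rw [Metric.eventually_nhds_iff] at hev
  obtain ⟨ε, hε, hball⟩ := hev
  set δ : ℝ := min (ε / 2) (min 1 (1 / (4 * C))) with hδdef
  have hδpos : 0 < δ := by
    apply lt_min (by linarith)
    apply lt_min one_pos
    positivity
  have hδ1 : δ ≤ 1 := le_trans (min_le_right _ _) (min_le_left _ _)
  have hδC : δ ≤ 1 / (4 * C) := le_trans (min_le_right _ _) (min_le_right _ _)
  have hδε : δ < ε := lt_of_le_of_lt (min_le_left _ _) (by linarith)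
  -- main contraction estimate
  have hstep : ∀ y : ℝ, y ≠ 0 → |y| ≤ δ → gg P y ≠ 0 ∧ |gg P y| ≤ |y| / 2 := by
    intro y hy hyδ
    have hdist : dist y 0 < ε := by
      rw [Real.dist_eq, sub_zero]; linarith
    have hratio : |gg P y / y ^ (2 * P + 1) - C| < C := hball hdist hy
    constructor
    · intro h0
      rw [h0, zero_div, zero_sub, abs_neg, abs_of_pos hCpos] at hratio
      exact lt_irrefl C hratio
    · have hrabs : |gg P y / y ^ (2 * P + 1)| < 2 * C := by
        have := abs_sub_abs_le_abs_sub (gg P y / y ^ (2 * P + 1)) C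
        rw [abs_of_pos hCpos] at this
        linarith
      have hyne : y ^ (2 * P + 1) ≠ 0 := pow_ne_zero _ hy
      have heq : gg P y = (gg P y / y ^ (2 * P + 1)) * y ^ (2 * P + 1) := by
        field_simp
      rw [heq, abs_mul, abs_pow]
      have h1 : |y| ^ (2 * P + 1) = |y| ^ (2 * P) * |y| := by ring
      rw [h1]
      have h2 : |y| ^ (2 * P) ≤ δ ^ (2 * P) :=
        pow_le_pow_left₀ (abs_nonneg y) hyδ _
      have h3 : δ ^ (2 * P) ≤ δ := by
        calc δ ^ (2 * P) ≤ δ ^ 1 := pow_le_pow_of_le_one (le_of_lt hδpos) hδ1 (by omega)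
          _ = δ := pow_one δ
      have h4 : |gg P y / y ^ (2 * P + 1)| * (|y| ^ (2 * P) * |y|) ≤ (2 * C) * (δ * |y|) := by
        apply mul_le_mul (le_of_lt hrabs)
        · apply mul_le_mul (le_trans h2 h3) (le_refl _) (abs_nonneg y)
          linarith
        · positivity
        · positivity
      have h5 : (2 * C) * (δ * |y|) ≤ |y| / 2 := by
        have h6 : 2 * C * δ ≤ 1 / 2 := by
          have : 4 * C > 0 := by positivity
          calc 2 * C * δ ≤ 2 * C * (1 / (4 * C)) := by
                apply mul_le_mul_of_nonneg_left hδC (by positivity)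
            _ = 1 / 2 := by field_simp; ring
        calc (2 * C) * (δ * |y|) = (2 * C * δ) * |y| := by ring
          _ ≤ (1/2) * |y| := mul_le_mul_of_nonneg_right h6 (abs_nonneg y)
          _ = |y| / 2 := by ring
      linarith
  refine ⟨δ, hδpos, ?_⟩
  intro x₀ hx0 hx0δ
  set E : ℕ → ℝ := fun n => (S P)^[n] x₀ - Real.pi with hE
  have hE0 : E 0 = x₀ - Real.pi := by simp [hE]
  have hEs : ∀ n, E (n + 1) = gg P (E n) := by
    intro n
    have h1 : (S P)^[n+1] x₀ = S P ((S P)^[n] x₀) := Function.iterate_succ_apply' _ _ _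
    have h2 : (S P)^[n] x₀ = Real.pi + E n := by simp [hE]
    rw [hE]
    simp only
    rw [h1, h2, S_pi_add]
    ring
  have hind : ∀ n, E n ≠ 0 ∧ |E n| ≤ δ / 2 ^ n := by
    intro n
    induction n with
    | zero =>
      refine ⟨?_, by simpa [hE0] using hx0δ⟩
      rw [hE0]
      intro h
      rw [h] at hx0
      simp at hx0
    | succ n ih =>
      obtain ⟨hne, hle⟩ := ih
      have hδn : δ / 2 ^ n ≤ δ := by
        apply div_le_self (le_of_lt hδpos)
        exact one_le_pow₀ one_le_two
      have := hstep (E n) hne (le_trans hle hδn)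
      refine ⟨by rw [hEs n]; exact this.1, ?_⟩
      rw [hEs n]
      calc |gg P (E n)| ≤ |E n| / 2 := this.2
        _ ≤ (δ / 2 ^ n) / 2 := by linarith
        _ = δ / 2 ^ (n + 1) := by rw [pow_succ]; ring
  have hEtendsto : Tendsto E atTop (nhds 0) := by
    apply squeeze_zero_norm (fun n => (hind n).2)
    have h2 : Tendsto (fun n : ℕ => δ * (1/2 : ℝ) ^ n) atTop (nhds (δ * 0)) :=
      (tendsto_pow_atTop_nhds_zero_of_lt_one (by norm_num) (by norm_num)).const_mul δ
    rw [mul_zero] at h2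
    apply h2.congr
    intro n
    rw [one_div, inv_pow, ← div_eq_mul_inv]
  refine ⟨fun n => ?_, ?_, ?_⟩
  · have := (hind n).1
    intro h
    apply this
    rw [hE]
    simp only
    rw [h, sub_self]
  · have := hEtendsto.const_add Real.pi
    rw [add_zero] at this
    apply this.congr
    intro n
    simp [hE]
  · have hEne : Tendsto E atTop (nhdsWithin (0:ℝ) {0}ᶜ) := by
      rw [tendsto_nhdsWithin_iff]
      exact ⟨hEtendsto, Eventually.of_forall (fun n => (hind n).1)⟩
    have hcomp := (key P hP).comp hEne
    rw [const_eq P] at hcomp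
    apply hcomp.congr
    intro n
    simp only [Function.comp_apply]
    rw [← hEs n]
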